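/- arXiv:2202.09863 — 3 statements merged into one kernel-verified Lean document; each statement's English description precedes it below -/
import Mathlib

section
/- Every bounded set of diameter 1 in the Euclidean plane can be covered by a regular hexagon whose distance between opposite sides is 1 (equivalently, of side length 1/√3). -/
open Real

/-- The vertices of a regular hexagon with circumradius (= side length) `1/√3`,
centered at the origin; the distance between opposite sides is `1`. -/
noncomputable def hexVertex (k : Fin 6) : EuclideanSpace ℝ (Fin 2) :=
  (WithLp.equiv 2 (Fin 2 → ℝ)).symm
    ![Real.cos ((k : ℝ) * π / 3) / Real.sqrt 3,
      Real.sin ((k : ℝ) * π / 3) / Real.sqrt 3]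

/-- The standard regular hexagon of side length `1/√3`. -/
noncomputable def stdHexagon : Set (EuclideanSpace ℝ (Fin 2)) :=
  convexHull ℝ (Set.range hexVertex)

/-!
Write `h(v) = sup_{x ∈ S} ⟪x, v⟫` for the support function of `S`. For a unit vector `v`,
`h(v) + h(-v) ≤ diam S = 1`, so `S` lies in every slab `{x | |⟪x, v⟫ - m| ≤ 1/2}` whose centre `m`
lies in the interval `[h(v) - 1/2, 1/2 - h(-v)]`. Three such slabs with unit normals `v₁`,
`v₂ = v₁ + v₃`, `v₃` (at angles `0`, `π/3`, `2π/3`) cut out a regular hexagon of width `1` as soon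
as their centres satisfy `m₂ = m₁ + m₃`, and such centres exist iff
`h(v₁) + h(-v₂) + h(v₃) ≤ 3/2` and `h(-v₁) + h(v₂) + h(-v₃) ≤ 3/2`. The two sums add up to at most
`3`, and their difference changes sign when the frame is turned by `π/3`; by the intermediate
value theorem some frame makes them equal, hence both at most `3/2`.
-/

open RealInnerProductSpace Set Bornology Metric Function

section SupportFunction

variable {F : Type*} [NormedAddCommGroup F] [InnerProductSpace ℝ F] {S : Set F}

noncomputable def supportFun (S : Set F) (v : F) : ℝ :=
  sSup ((fun x => ⟪x, v⟫) '' S)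

lemma bddAbove_image_inner (hS : IsBounded S) (v : F) :
    BddAbove ((fun x => ⟪x, v⟫) '' S) := by
  obtain ⟨R, hR⟩ := hS.exists_norm_le
  refine ⟨R * ‖v‖, ?_⟩
  rintro - ⟨x, hx, rfl⟩
  exact (real_inner_le_norm x v).trans (by gcongr; exact hR x hx)

lemma inner_le_supportFun (hS : IsBounded S) {x : F} (hx : x ∈ S) (v : F) :
    ⟪x, v⟫ ≤ supportFun S v :=
  le_csSup (bddAbove_image_inner hS v) (mem_image_of_mem _ hx)

lemma supportFun_le (hne : S.Nonempty) {v : F} {c : ℝ} (h : ∀ x ∈ S, ⟪x, v⟫ ≤ c) :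
    supportFun S v ≤ c :=
  csSup_le (hne.image _) (forall_mem_image.2 h)

lemma supportFun_add_supportFun_neg_le (hS : IsBounded S) (hne : S.Nonempty) (v : F) :
    supportFun S v + supportFun S (-v) ≤ diam S * ‖v‖ := by
  suffices ∀ x ∈ S, ∀ y ∈ S, ⟪x, v⟫ + ⟪y, -v⟫ ≤ diam S * ‖v‖ by
    rw [← le_sub_iff_add_le]
    refine supportFun_le hne fun x hx => ?_
    rw [le_sub_comm]
    exact supportFun_le hne fun y hy => le_sub_iff_add_le'.2 (this x hx y hy)
  intro x hx y hy
  calc ⟪x, v⟫ + ⟪y, -v⟫ = ⟪x - y, v⟫ := by rw [inner_neg_right, inner_sub_left]; ring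
    _ ≤ ‖x - y‖ * ‖v‖ := real_inner_le_norm _ _
    _ ≤ diam S * ‖v‖ := by gcongr; exact dist_eq_norm x y ▸ dist_le_diam_of_mem hS hx hy

lemma continuous_supportFun (hS : IsBounded S) (hne : S.Nonempty) :
    Continuous (supportFun S) := by
  obtain ⟨R, hR⟩ := hS.exists_norm_le
  refine (LipschitzWith.of_le_add_mul' R fun v w => ?_).continuous
  refine supportFun_le hne fun x hx => ?_
  calc ⟪x, v⟫ = ⟪x, w⟫ + ⟪x, v - w⟫ := by rw [inner_sub_right]; ring
    _ ≤ supportFun S w + R * dist v w := by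
      gcongr
      · exact inner_le_supportFun hS hx w
      · exact (real_inner_le_norm _ _).trans (by rw [dist_eq_norm]; gcongr; exact hR x hx)

lemma abs_inner_sub_le_of_mem_Icc (hS : IsBounded S) {x c v : F} (hx : x ∈ S) {r : ℝ}
    (hc : ⟪c, v⟫ ∈ Icc (supportFun S v - r) (r - supportFun S (-v))) : |⟪x - c, v⟫| ≤ r := by
  have h₁ := inner_le_supportFun hS hx v
  have h₂ := inner_le_supportFun hS hx (-v)
  rw [inner_neg_right] at h₂
  rw [inner_sub_left, abs_le]
  constructor <;> linarith [hc.1, hc.2]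

lemma exists_mem_Icc_add_mem_Icc {a₁ b₁ a₂ b₂ a₃ b₃ : ℝ} (h₁ : a₁ ≤ b₁) (h₂ : a₂ ≤ b₂)
    (h₃ : a₃ ≤ b₃) (hlo : a₁ + a₃ ≤ b₂) (hhi : a₂ ≤ b₁ + b₃) :
    ∃ m₁ ∈ Icc a₁ b₁, ∃ m₃ ∈ Icc a₃ b₃, m₁ + m₃ ∈ Icc a₂ b₂ := by
  obtain ⟨m, hm, hm₂⟩ : (Icc (a₁ + a₃) (b₁ + b₃) ∩ Icc a₂ b₂).Nonempty := by
    rw [Icc_inter_Icc, nonempty_Icc]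
    exact le_min (max_le (by linarith) hhi) (max_le hlo h₂)
  rw [← Icc_add_Icc h₁ h₃] at hm
  obtain ⟨m₁, hm₁, m₃, hm₃, rfl⟩ := hm
  exact ⟨m₁, hm₁, m₃, hm₃, hm₂⟩

lemma exists_inner_eq_of_inner_eq_neg_half {v₁ v₃ : F} (h₁ : ‖v₁‖ = 1) (h₃ : ‖v₃‖ = 1)
    (h₁₃ : ⟪v₁, v₃⟫ = -1 / 2) (m₁ m₃ : ℝ) : ∃ c : F, ⟪c, v₁⟫ = m₁ ∧ ⟪c, v₃⟫ = m₃ := by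
  -- the coefficients invert the Gram matrix `!![1, -1/2; -1/2, 1]` of `v₁, v₃`
  refine ⟨((4 * m₁ + 2 * m₃) / 3) • v₁ + ((2 * m₁ + 4 * m₃) / 3) • v₃, ?_, ?_⟩ <;>
    simp only [inner_add_left, real_inner_smul_left, real_inner_self_eq_norm_sq, h₁, h₃, h₁₃,
      real_inner_comm v₁ v₃] <;> ring

lemma exists_center_of_balanced (hS : IsBounded S) (hne : S.Nonempty) (hdiam : diam S ≤ 1)
    {v₁ v₃ : F} (h₁ : ‖v₁‖ = 1) (h₂ : ‖v₁ + v₃‖ = 1) (h₃ : ‖v₃‖ = 1)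
    (hbal : supportFun S v₁ - supportFun S (-v₁) + (supportFun S v₃ - supportFun S (-v₃)) =
      supportFun S (v₁ + v₃) - supportFun S (-(v₁ + v₃))) :
    ∃ c : F, ∀ x ∈ S, |⟪x - c, v₁⟫| ≤ 1 / 2 ∧ |⟪x - c, v₁ + v₃⟫| ≤ 1 / 2 ∧
      |⟪x - c, v₃⟫| ≤ 1 / 2 := by
  have h₁₃ : ⟪v₁, v₃⟫ = -1 / 2 := by
    have := norm_add_sq_real v₁ v₃
    rw [h₁, h₂, h₃] at this
    linarith
  have hwidth : ∀ v : F, ‖v‖ = 1 → supportFun S v + supportFun S (-v) ≤ 1 := fun v hv =>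
    (supportFun_add_supportFun_neg_le hS hne v).trans (by rw [hv, mul_one]; exact hdiam)
  have w₁ := hwidth v₁ h₁
  have w₂ := hwidth _ h₂
  have w₃ := hwidth v₃ h₃
  obtain ⟨m₁, hm₁, m₃, hm₃, hm₂⟩ := exists_mem_Icc_add_mem_Icc
    (a₁ := supportFun S v₁ - 1 / 2) (b₁ := 1 / 2 - supportFun S (-v₁))
    (a₂ := supportFun S (v₁ + v₃) - 1 / 2) (b₂ := 1 / 2 - supportFun S (-(v₁ + v₃)))
    (a₃ := supportFun S v₃ - 1 / 2) (b₃ := 1 / 2 - supportFun S (-v₃))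
    (by linarith) (by linarith) (by linarith) (by linarith) (by linarith)
  obtain ⟨c, hc₁, hc₃⟩ := exists_inner_eq_of_inner_eq_neg_half h₁ h₃ h₁₃ m₁ m₃
  refine ⟨c, fun x hx => ⟨?_, ?_, ?_⟩⟩ <;> apply abs_inner_sub_le_of_mem_Icc hS hx
  · rwa [hc₁]
  · rwa [inner_add_right, hc₁, hc₃]
  · rwa [hc₃]

end SupportFunction

theorem Function.Antiperiodic.exists_eq_zero {α : Type*} [Add α] [TopologicalSpace α]
    [PreconnectedSpace α] [Nonempty α] {f : α → ℝ} {c : α} (hf : Antiperiodic f c)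
    (hc : Continuous f) : ∃ x, f x = 0 := by
  obtain ⟨x⟩ := ‹Nonempty α›
  have hx := hf x
  obtain h | h := le_total (f x) 0
  · exact mem_range_of_exists_le_of_exists_ge hc ⟨x, h⟩ ⟨x + c, by linarith⟩
  · exact mem_range_of_exists_le_of_exists_ge hc ⟨x + c, by linarith⟩ ⟨x, h⟩

theorem Function.Antiperiodic.exists_add_eq {w : ℝ → ℝ} {c : ℝ} (hw : Antiperiodic w (3 * c))
    (hc : Continuous w) : ∃ θ, w θ + w (θ + 2 * c) = w (θ + c) := by
  have hQ : Antiperiodic (fun θ => w θ + w (θ + 2 * c) - w (θ + c)) c := fun θ => by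
    have := hw θ
    simp only [add_assoc, ← two_mul, show c + 2 * c = 3 * c by ring] at this ⊢
    linarith
  obtain ⟨θ, hθ⟩ := hQ.exists_eq_zero (by fun_prop)
  exact ⟨θ, sub_eq_zero.1 hθ⟩

section Hexagon

variable {V : Type*} [AddCommGroup V] [Module ℝ V]

lemma Convex.smul_add_smul_mem_of_zero_mem {s : Set V} (hs : Convex ℝ s) (h₀ : (0 : V) ∈ s)
    {p q : V} (hp : p ∈ s) (hq : q ∈ s) {a b : ℝ} (ha : 0 ≤ a) (hb : 0 ≤ b) (hab : a + b ≤ 1) :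
    a • p + b • q ∈ s := by
  obtain hab₀ | hab₀ := (add_nonneg ha hb).eq_or_lt
  · obtain ⟨rfl, rfl⟩ : a = 0 ∧ b = 0 := ⟨by linarith, by linarith⟩
    simpa using h₀
  · have hmid := hs hp hq (div_nonneg ha hab₀.le) (div_nonneg hb hab₀.le)
      (by rw [← add_div, div_self hab₀.ne'])
    convert hs.smul_mem_of_zero_mem h₀ hmid ⟨hab₀.le, hab⟩ using 1
    rw [smul_add, smul_smul, smul_smul, mul_div_cancel₀ _ hab₀.ne', mul_div_cancel₀ _ hab₀.ne']

lemma smul_add_smul_mem_convexHull_of_abs_le (a b : V) {α β : ℝ} (hα : |α| ≤ 1)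
    (hβ : |β| ≤ 1) (hαβ : |α + β| ≤ 1) :
    α • a + β • b ∈ convexHull ℝ {a, b, b - a, -a, -b, a - b} := by
  set P : Set V := {a, b, b - a, -a, -b, a - b}
  have hP : Convex ℝ (convexHull ℝ P) := convex_convexHull ℝ P
  have h₀ : (0 : V) ∈ convexHull ℝ P := by
    simpa using hP (subset_convexHull ℝ P (show a ∈ P by simp [P]))
      (subset_convexHull ℝ P (show -a ∈ P by simp [P])) (by norm_num : (0 : ℝ) ≤ 1 / 2)
      (by norm_num : (0 : ℝ) ≤ 1 / 2) (by norm_num)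
  have tri : ∀ p ∈ P, ∀ q ∈ P, ∀ s t : ℝ, 0 ≤ s → 0 ≤ t → s + t ≤ 1 →
      s • p + t • q ∈ convexHull ℝ P := fun p hp q hq _ _ =>
    hP.smul_add_smul_mem_of_zero_mem h₀ (subset_convexHull ℝ P hp) (subset_convexHull ℝ P hq)
  -- one case per triangle `0, p, q` with `p, q` adjacent vertices
  rw [abs_le] at hα hβ hαβ
  rcases le_total 0 α with hα₀ | hα₀ <;> rcases le_total 0 β with hβ₀ | hβ₀
  · exact tri a (by simp [P]) b (by simp [P]) α β hα₀ hβ₀ (by linarith)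
  · rcases le_total 0 (α + β) with h | h
    · convert tri a (by simp [P]) (a - b) (by simp [P]) (α + β) (-β) h (by linarith)
        (by linarith) using 1
      module
    · convert tri (a - b) (by simp [P]) (-b) (by simp [P]) α (-(α + β)) hα₀ (by linarith)
        (by linarith) using 1
      module
  · rcases le_total 0 (α + β) with h | h
    · convert tri b (by simp [P]) (b - a) (by simp [P]) (α + β) (-α) h (by linarith)
        (by linarith) using 1
      module
    · convert tri (b - a) (by simp [P]) (-a) (by simp [P]) β (-(α + β)) hβ₀ (by linarith)
        (by linarith) using 1
      module
  · convert tri (-a) (by simp [P]) (-b) (by simp [P]) (-α) (-β) (by linarith) (by linarith)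
      (by linarith) using 1
    module

end Hexagon

section Plane

local notation "ℝ²" => EuclideanSpace ℝ (Fin 2)

noncomputable def unitVec (θ : ℝ) : ℝ² := !₂[cos θ, sin θ]

lemma inner_unitVec (z : ℝ²) (θ : ℝ) : ⟪z, unitVec θ⟫ = z 0 * cos θ + z 1 * sin θ := by
  simp [unitVec, PiLp.inner_apply, Fin.sum_univ_two, mul_comm]

lemma norm_unitVec (θ : ℝ) : ‖unitVec θ‖ = 1 := by
  simp [unitVec, EuclideanSpace.norm_eq, Fin.sum_univ_two]

lemma continuous_unitVec : Continuous unitVec := by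
  unfold unitVec
  fun_prop

lemma unitVec_add_pi (θ : ℝ) : unitVec (θ + π) = -unitVec θ := by
  ext i; fin_cases i <;> simp [unitVec]

lemma unitVec_add_unitVec_add_two_pi_div_three (θ : ℝ) :
    unitVec θ + unitVec (θ + 2 * π / 3) = unitVec (θ + π / 3) := by
  obtain ⟨ψ, rfl⟩ : ∃ ψ, θ = ψ - π / 3 := ⟨θ + π / 3, by ring⟩
  rw [show ψ - π / 3 + 2 * π / 3 = ψ + π / 3 by ring, sub_add_cancel]
  ext i; fin_cases i <;>
    simp [unitVec, cos_add, sin_add, cos_sub, sin_sub, cos_pi_div_three, sin_pi_div_three] <;> ring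

noncomputable def planeRotation (φ : ℝ) : ℝ² ≃ₗᵢ[ℝ] ℝ² :=
  Complex.orthonormalBasisOneI.repr.symm.trans
    ((rotation (Circle.exp φ)).trans Complex.orthonormalBasisOneI.repr)

lemma planeRotation_unitVec (φ ψ : ℝ) : planeRotation φ (unitVec ψ) = unitVec (φ + ψ) := by
  ext i; fin_cases i <;>
    simp [planeRotation, unitVec, cos_add, sin_add, Circle.coe_exp, Complex.cos_ofReal_re,
      Complex.sin_ofReal_re]
  ring

lemma hexVertex_eq_smul_unitVec (k : Fin 6) : hexVertex k = (√3)⁻¹ • unitVec (k * π / 3) := by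
  ext i; fin_cases i <;> simp [hexVertex, unitVec, div_eq_inv_mul]

lemma hexVertex_two : hexVertex 2 = hexVertex 1 - hexVertex 0 := by
  simp only [hexVertex_eq_smul_unitVec, ← smul_sub]
  norm_num
  rw [eq_sub_iff_add_eq', ← zero_add (2 * π / 3), unitVec_add_unitVec_add_two_pi_div_three,
    zero_add]

lemma hexVertex_three : hexVertex 3 = -hexVertex 0 := by
  simp only [hexVertex_eq_smul_unitVec, ← smul_neg, ← unitVec_add_pi]
  norm_num

lemma hexVertex_four : hexVertex 4 = -hexVertex 1 := by
  simp only [hexVertex_eq_smul_unitVec, ← smul_neg, ← unitVec_add_pi]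
  norm_num
  ring_nf

lemma hexVertex_five : hexVertex 5 = hexVertex 0 - hexVertex 1 := by
  rw [← neg_sub, ← hexVertex_two]
  simp only [hexVertex_eq_smul_unitVec, ← smul_neg, ← unitVec_add_pi]
  norm_num
  ring_nf

lemma subset_range_hexVertex : ({hexVertex 0, hexVertex 1, hexVertex 1 - hexVertex 0,
    -hexVertex 0, -hexVertex 1, hexVertex 0 - hexVertex 1} : Set ℝ²) ⊆ range hexVertex := by
  rintro - (rfl | rfl | rfl | rfl | rfl | rfl)
  exacts [⟨0, rfl⟩, ⟨1, rfl⟩, ⟨2, hexVertex_two⟩, ⟨3, hexVertex_three⟩, ⟨4, hexVertex_four⟩,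
    ⟨5, hexVertex_five⟩]

lemma eq_smul_hexVertex_zero_add_smul_hexVertex_one (z : ℝ²) :
    z = (√3 * z 0 - z 1) • hexVertex 0 + (2 * z 1) • hexVertex 1 := by
  ext i; fin_cases i <;> simp [hexVertex, cos_pi_div_three, sin_pi_div_three] <;> field_simp
  ring

lemma mem_stdHexagon_of_abs_inner_le {z : ℝ²} (h₁ : |⟪z, unitVec (π / 6)⟫| ≤ 1 / 2)
    (h₂ : |⟪z, unitVec (π / 2)⟫| ≤ 1 / 2) (h₃ : |⟪z, unitVec (5 * π / 6)⟫| ≤ 1 / 2) :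
    z ∈ stdHexagon := by
  rw [show 5 * π / 6 = π - π / 6 by ring] at h₃
  simp only [inner_unitVec, cos_pi_div_six, sin_pi_div_six, cos_pi_div_two, sin_pi_div_two,
    cos_pi_sub, sin_pi_sub, abs_le] at h₁ h₂ h₃
  rw [eq_smul_hexVertex_zero_add_smul_hexVertex_one z]
  refine convexHull_mono subset_range_hexVertex
    (smul_add_smul_mem_convexHull_of_abs_le _ _ ?_ ?_ ?_) <;> rw [abs_le] <;> constructor <;>
    linarith

lemma exists_balanced_unitVec {S : Set ℝ²} (hS : IsBounded S) (hne : S.Nonempty) :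
    ∃ θ, supportFun S (unitVec θ) - supportFun S (-unitVec θ) +
      (supportFun S (unitVec (θ + 2 * π / 3)) - supportFun S (-unitVec (θ + 2 * π / 3))) =
      supportFun S (unitVec θ + unitVec (θ + 2 * π / 3)) -
        supportFun S (-(unitVec θ + unitVec (θ + 2 * π / 3))) := by
  set w : ℝ → ℝ := fun θ => supportFun S (unitVec θ) - supportFun S (-unitVec θ)
  have hw : Antiperiodic w (3 * (π / 3)) := fun θ => by
    simp only [w, show 3 * (π / 3) = π by ring, unitVec_add_pi, neg_neg, neg_sub]
  have hcont : Continuous w := by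
    have := continuous_supportFun hS hne
    exact (this.comp continuous_unitVec).sub (this.comp continuous_unitVec.neg)
  obtain ⟨θ, hθ⟩ := hw.exists_add_eq hcont
  rw [← mul_div_assoc] at hθ
  exact ⟨θ, by rw [unitVec_add_unitVec_add_two_pi_div_three]; exact hθ⟩

end Plane

/-- Pál's theorem: every set of diameter `1` in the plane is contained in a
(congruent copy of the) regular hexagon of side length `1/√3`. -/
theorem pal_hexagon_cover (S : Set (EuclideanSpace ℝ (Fin 2)))
    (hS : Bornology.IsBounded S) (hd : Metric.diam S = 1) :
    ∃ f : EuclideanSpace ℝ (Fin 2) ≃ᵢ EuclideanSpace ℝ (Fin 2),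
      S ⊆ f '' stdHexagon := by
  have hne : S.Nonempty := nonempty_iff_ne_empty.2 fun h => by simp [h] at hd
  obtain ⟨θ, hθ⟩ := exists_balanced_unitVec hS hne
  obtain ⟨c, hc⟩ := exists_center_of_balanced hS hne hd.le (norm_unitVec θ)
    (by rw [unitVec_add_unitVec_add_two_pi_div_three]; exact norm_unitVec _) (norm_unitVec _) hθ
  let R := planeRotation (θ - π / 6)
  let f := R.toIsometryEquiv.trans (IsometryEquiv.addRight c)
  refine ⟨f, fun x hx => ⟨f.symm x, ?_, f.apply_symm_apply x⟩⟩
  have hinner : ∀ ψ, ⟪f.symm x, unitVec ψ⟫ = ⟪x - c, unitVec (θ - π / 6 + ψ)⟫ := fun ψ => by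
    rw [show f.symm x = R.symm (x - c) by simp [f, sub_eq_add_neg], R.symm.inner_map_eq_flip,
      R.symm_symm, planeRotation_unitVec]
  obtain ⟨h₁, h₂, h₃⟩ := hc x hx
  rw [unitVec_add_unitVec_add_two_pi_div_three] at h₂
  apply mem_stdHexagon_of_abs_inner_le <;> rw [hinner]
  · rwa [sub_add_cancel]
  · rwa [show θ - π / 6 + π / 2 = θ + π / 3 by ring]
  · rwa [show θ - π / 6 + 5 * π / 6 = θ + 2 * π / 3 by ring]
end

section
/- Every bounded set of diameter 1 in the Euclidean plane can be partitioned into three subsets, each of diameter at most √3/2. -/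
set_option maxHeartbeats 1600000

open Real

namespace BorsukAux

theorem core (a b c d e f : ℝ) (hs : a + b + c = 0) (ht : d + e + f = 0)
    (ha : |a| ≤ 1/2) (hb : |b| ≤ 1/2) (hc : |c| ≤ 1/2)
    (hd : |d| ≤ 1/2) (he : |e| ≤ 1/2) (hf : |f| ≤ 1/2)
    (h1 : c ≤ a) (h2 : c ≤ b) (h3 : f ≤ d) (h4 : f ≤ e) :
    (a-d)^2 + (b-e)^2 + (c-f)^2 ≤ 9/8 := by
  rw [abs_le] at ha hb hc hd he hf
  have ha' : -(1/4) ≤ a := by linarith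
  have hb' : -(1/4) ≤ b := by linarith
  have hd' : -(1/4) ≤ d := by linarith
  have he' : -(1/4) ≤ e := by linarith
  set u := a - d with hu
  set v := b - e with hv
  have hcf : c - f = -(u + v) := by rw [hu, hv]; linarith
  rw [hcf]
  have hu1 : u ≤ 3/4 := by rw [hu]; linarith
  have hu2 : -(3/4) ≤ u := by rw [hu]; linarith
  have hv1 : v ≤ 3/4 := by rw [hv]; linarith
  have hv2 : -(3/4) ≤ v := by rw [hv]; linarith
  have hp1 : u + v ≤ 1/2 := by rw [hu, hv]; linarith
  have hp2 : -(1/2) ≤ u + v := by rw [hu, hv]; linarith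
  rcases le_total 0 (u + v) with hp | hp
  · nlinarith [mul_nonneg (by linarith : (0:ℝ) ≤ 3/4 - u) (by linarith : (0:ℝ) ≤ 3/4 - v),
      mul_nonneg hp (by linarith : (0:ℝ) ≤ 3/2 - 2*(u+v))]
  · nlinarith [mul_nonneg (by linarith : (0:ℝ) ≤ 3/4 + u) (by linarith : (0:ℝ) ≤ 3/4 + v),
      mul_nonneg (by linarith : (0:ℝ) ≤ -(u+v)) (by linarith : (0:ℝ) ≤ 3/2 + 2*(u+v))]

theorem lin_le_sqrt (a b c s : ℝ) (h : c^2 + s^2 = 1) :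
    a*c + b*s ≤ Real.sqrt (a^2 + b^2) := by
  rcases le_total (a*c + b*s) 0 with h0 | h0
  · exact h0.trans (Real.sqrt_nonneg _)
  · have h2 : (a*c + b*s)^2 ≤ a^2 + b^2 := by nlinarith [sq_nonneg (a*s - b*c)]
    calc a*c + b*s = Real.sqrt ((a*c + b*s)^2) := (Real.sqrt_sq h0).symm
    _ ≤ Real.sqrt (a^2 + b^2) := Real.sqrt_le_sqrt h2

theorem cos_lip (a b : ℝ) : |Real.cos a - Real.cos b| ≤ |a - b| := by
  rw [Real.cos_sub_cos]
  have h1 : |Real.sin ((a-b)/2)| ≤ |(a-b)/2| := Real.abs_sin_le_abs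
  have h2 : |Real.sin ((a+b)/2)| ≤ 1 := Real.abs_sin_le_one _
  have h3 : |(a-b)/2| = |a-b|/2 := by rw [abs_div]; norm_num
  calc |(-2) * Real.sin ((a+b)/2) * Real.sin ((a-b)/2)|
      = 2 * |Real.sin ((a+b)/2)| * |Real.sin ((a-b)/2)| := by
        rw [abs_mul, abs_mul]; norm_num
    _ ≤ 2 * 1 * (|a-b|/2) := by
        apply mul_le_mul _ (h3 ▸ h1) (abs_nonneg _) (by norm_num)
        exact mul_le_mul_of_nonneg_left h2 (by norm_num)
    _ = |a - b| := by ring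

theorem sin_lip (a b : ℝ) : |Real.sin a - Real.sin b| ≤ |a - b| := by
  rw [Real.sin_sub_sin]
  have h1 : |Real.sin ((a-b)/2)| ≤ |(a-b)/2| := Real.abs_sin_le_abs
  have h2 : |Real.cos ((a+b)/2)| ≤ 1 := Real.abs_cos_le_one _
  have h3 : |(a-b)/2| = |a-b|/2 := by rw [abs_div]; norm_num
  calc |2 * Real.sin ((a-b)/2) * Real.cos ((a+b)/2)|
      = 2 * |Real.sin ((a-b)/2)| * |Real.cos ((a+b)/2)| := by
        rw [abs_mul, abs_mul]; norm_num
    _ ≤ 2 * (|a-b|/2) * 1 := by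
        apply mul_le_mul _ h2 (abs_nonneg _) (by positivity)
        exact mul_le_mul_of_nonneg_left (h3 ▸ h1) (by norm_num)
    _ = |a - b| := by ring

theorem coord_abs_le_norm (x : EuclideanSpace ℝ (Fin 2)) (i : Fin 2) : |x i| ≤ ‖x‖ := by
  rw [EuclideanSpace.norm_eq]
  rw [show |x i| = Real.sqrt (‖x i‖^2) by rw [Real.sqrt_sq (norm_nonneg _)]; exact (Real.norm_eq_abs _).symm]
  apply Real.sqrt_le_sqrt
  exact Finset.single_le_sum (f := fun j => ‖x j‖^2) (fun j _ => sq_nonneg _) (Finset.mem_univ i)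

theorem dist_formula (x y : EuclideanSpace ℝ (Fin 2)) :
    dist x y = Real.sqrt ((x 0 - y 0)^2 + (x 1 - y 1)^2) := by
  rw [EuclideanSpace.dist_eq, Fin.sum_univ_two]
  congr 1
  rw [Real.dist_eq, Real.dist_eq, sq_abs, sq_abs]

noncomputable def gg (θ : ℝ) (x : EuclideanSpace ℝ (Fin 2)) : ℝ :=
  x 0 * Real.cos θ + x 1 * Real.sin θ

theorem gg_sub_le (θ : ℝ) (x y : EuclideanSpace ℝ (Fin 2)) :
    gg θ x - gg θ y ≤ dist x y := by
  rw [dist_formula]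
  have := lin_le_sqrt (x 0 - y 0) (x 1 - y 1) (Real.cos θ) (Real.sin θ)
    (by rw [← Real.sin_sq_add_cos_sq θ]; ring)
  simp only [gg]; linarith [this]

theorem gg_pi (θ : ℝ) (x : EuclideanSpace ℝ (Fin 2)) : gg (θ + π) x = -gg θ x := by
  simp only [gg, Real.cos_add, Real.sin_add, Real.cos_pi, Real.sin_pi]; ring

theorem gg_two_pi (θ : ℝ) (x : EuclideanSpace ℝ (Fin 2)) : gg (θ + 2*π) x = gg θ x := by
  simp only [gg, Real.cos_add_two_pi, Real.sin_add_two_pi]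

theorem cos_add_23 (θ : ℝ) :
    Real.cos (θ + 2*π/3) = -(1/2)*Real.cos θ - (Real.sqrt 3/2)*Real.sin θ := by
  rw [Real.cos_add, show (2*π/3 : ℝ) = π - π/3 by ring, Real.cos_pi_sub, Real.sin_pi_sub,
    Real.cos_pi_div_three, Real.sin_pi_div_three]; ring

theorem sin_add_23 (θ : ℝ) :
    Real.sin (θ + 2*π/3) = (Real.sqrt 3/2)*Real.cos θ - (1/2)*Real.sin θ := by
  rw [Real.sin_add, show (2*π/3 : ℝ) = π - π/3 by ring, Real.cos_pi_sub, Real.sin_pi_sub,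
    Real.cos_pi_div_three, Real.sin_pi_div_three]; ring

theorem cos_add_43 (θ : ℝ) :
    Real.cos (θ + 4*π/3) = -(1/2)*Real.cos θ + (Real.sqrt 3/2)*Real.sin θ := by
  rw [Real.cos_add, show (4*π/3 : ℝ) = π + π/3 by ring, Real.cos_add, Real.sin_add,
    Real.cos_pi, Real.sin_pi, Real.cos_pi_div_three, Real.sin_pi_div_three]; ring

theorem sin_add_43 (θ : ℝ) :
    Real.sin (θ + 4*π/3) = -(Real.sqrt 3/2)*Real.cos θ - (1/2)*Real.sin θ := by
  rw [Real.sin_add, show (4*π/3 : ℝ) = π + π/3 by ring, Real.cos_add, Real.sin_add,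
    Real.cos_pi, Real.sin_pi, Real.cos_pi_div_three, Real.sin_pi_div_three]; ring

theorem sum_zero (θ : ℝ) (x : EuclideanSpace ℝ (Fin 2)) :
    gg θ x + gg (θ + 2*π/3) x + gg (θ + 4*π/3) x = 0 := by
  simp only [gg, cos_add_23, sin_add_23, cos_add_43, sin_add_43]; ring

theorem sq_sum (θ : ℝ) (x y : EuclideanSpace ℝ (Fin 2)) :
    (gg θ x - gg θ y)^2 + (gg (θ+2*π/3) x - gg (θ+2*π/3) y)^2
      + (gg (θ+4*π/3) x - gg (θ+4*π/3) y)^2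
    = 3/2 * ((x 0 - y 0)^2 + (x 1 - y 1)^2) := by
  simp only [gg, cos_add_23, sin_add_23, cos_add_43, sin_add_43]
  have ht : Real.sqrt 3 ^ 2 = 3 := Real.sq_sqrt (by norm_num)
  have hcs : Real.cos θ ^ 2 + Real.sin θ ^ 2 = 1 := by
    rw [← Real.sin_sq_add_cos_sq θ]; ring
  set A := x 0 - y 0
  set B := x 1 - y 1
  set c := Real.cos θ
  set s := Real.sin θ
  set t := Real.sqrt 3
  linear_combination (A^2*s^2/2 - A*B*c*s + B^2*c^2/2) * ht + (3/2*(A^2+B^2)) * hcs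

end BorsukAux
/-- Planar Borsuk problem with the sharp constant: every bounded plane set of
diameter `1` can be partitioned into three subsets of diameter at most `√3/2`. -/
theorem borsuk_plane_sharp (S : Set (EuclideanSpace ℝ (Fin 2)))
    (hS : Bornology.IsBounded S) (hd : Metric.diam S = 1) :
    ∃ A B C : Set (EuclideanSpace ℝ (Fin 2)),
      S = A ∪ B ∪ C ∧ Disjoint A B ∧ Disjoint A C ∧ Disjoint B C ∧
      Metric.diam A ≤ Real.sqrt 3 / 2 ∧
      Metric.diam B ≤ Real.sqrt 3 / 2 ∧
      Metric.diam C ≤ Real.sqrt 3 / 2 := by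
  classical
  rcases S.eq_empty_or_nonempty with rfl | ⟨x₀, hx₀⟩
  · rw [Metric.diam_empty] at hd; exact absurd hd (by norm_num)
  obtain ⟨R, hR⟩ := isBounded_iff_forall_norm_le.mp hS
  have hR0 : 0 ≤ R := le_trans (norm_nonneg x₀) (hR x₀ hx₀)
  set f : ℝ → ℝ := fun φ => sSup (BorsukAux.gg φ '' S) with hf
  have hxiR : ∀ x ∈ S, |x 0| + |x 1| ≤ 2*R := by
    intro x hx
    have h0 := (BorsukAux.coord_abs_le_norm x 0).trans (hR x hx)
    have h1 := (BorsukAux.coord_abs_le_norm x 1).trans (hR x hx)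
    linarith
  have hcb : ∀ φ, ∀ x ∈ S, BorsukAux.gg φ x ≤ |x 0| + |x 1| := by
    intro φ x hx
    have h1 : x 0 * Real.cos φ ≤ |x 0| := by
      calc x 0 * Real.cos φ ≤ |x 0 * Real.cos φ| := le_abs_self _
      _ = |x 0| * |Real.cos φ| := abs_mul _ _
      _ ≤ |x 0| * 1 := mul_le_mul_of_nonneg_left (Real.abs_cos_le_one φ) (abs_nonneg _)
      _ = |x 0| := mul_one _
    have h2 : x 1 * Real.sin φ ≤ |x 1| := by
      calc x 1 * Real.sin φ ≤ |x 1 * Real.sin φ| := le_abs_self _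
      _ = |x 1| * |Real.sin φ| := abs_mul _ _
      _ ≤ |x 1| * 1 := mul_le_mul_of_nonneg_left (Real.abs_sin_le_one φ) (abs_nonneg _)
      _ = |x 1| := mul_one _
    simp only [BorsukAux.gg]
    linarith
  have hbdd : ∀ φ, BddAbove (BorsukAux.gg φ '' S) := by
    intro φ; refine ⟨2*R, ?_⟩; rintro _ ⟨x, hx, rfl⟩
    exact (hcb φ x hx).trans (hxiR x hx)
  have hfle : ∀ φ, ∀ x ∈ S, BorsukAux.gg φ x ≤ f φ := fun φ x hx =>
    le_csSup (hbdd φ) ⟨x, hx, rfl⟩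
  have hfub : ∀ (φ : ℝ) (c : ℝ), (∀ x ∈ S, BorsukAux.gg φ x ≤ c) → f φ ≤ c := fun φ c h =>
    csSup_le ⟨_, x₀, hx₀, rfl⟩ (by rintro _ ⟨x, hx, rfl⟩; exact h x hx)
  have hwidth : ∀ φ, f φ + f (φ + Real.pi) ≤ 1 := by
    intro φ
    have h1 : f φ ≤ 1 - f (φ + Real.pi) := by
      apply hfub; intro x hx
      have h2 : f (φ + Real.pi) ≤ 1 - BorsukAux.gg φ x := by
        apply hfub; intro y hy
        rw [BorsukAux.gg_pi]
        have h3 : BorsukAux.gg φ x - BorsukAux.gg φ y ≤ dist x y := BorsukAux.gg_sub_le φ x y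
        have h4 : dist x y ≤ 1 := hd ▸ Metric.dist_le_diam_of_mem hS hx hy
        linarith
      linarith
    linarith
  have hper : ∀ φ, f (φ + 2*Real.pi) = f φ := by
    intro φ
    have hgg : BorsukAux.gg (φ + 2*Real.pi) = BorsukAux.gg φ :=
      funext (BorsukAux.gg_two_pi φ)
    simp only [hf, hgg]
  have hlip : ∀ φ ψ, f φ ≤ f ψ + 2*R*|φ - ψ| := by
    intro φ ψ
    apply hfub; intro x hx
    have e0 : x 0 * Real.cos φ - x 0 * Real.cos ψ ≤ |x 0| * |φ - ψ| := by
      calc x 0 * Real.cos φ - x 0 * Real.cos ψ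
          = x 0 * (Real.cos φ - Real.cos ψ) := by ring
      _ ≤ |x 0 * (Real.cos φ - Real.cos ψ)| := le_abs_self _
      _ = |x 0| * |Real.cos φ - Real.cos ψ| := abs_mul _ _
      _ ≤ |x 0| * |φ - ψ| := mul_le_mul_of_nonneg_left (BorsukAux.cos_lip φ ψ) (abs_nonneg _)
    have e1 : x 1 * Real.sin φ - x 1 * Real.sin ψ ≤ |x 1| * |φ - ψ| := by
      calc x 1 * Real.sin φ - x 1 * Real.sin ψ
          = x 1 * (Real.sin φ - Real.sin ψ) := by ring
      _ ≤ |x 1 * (Real.sin φ - Real.sin ψ)| := le_abs_self _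
      _ = |x 1| * |Real.sin φ - Real.sin ψ| := abs_mul _ _
      _ ≤ |x 1| * |φ - ψ| := mul_le_mul_of_nonneg_left (BorsukAux.sin_lip φ ψ) (abs_nonneg _)
    have e2 : |x 0| * |φ - ψ| + |x 1| * |φ - ψ| ≤ 2*R*|φ - ψ| := by
      have h5 := hxiR x hx
      have h6 := abs_nonneg (φ - ψ)
      nlinarith
    have e3 := hfle ψ x hx
    simp only [BorsukAux.gg] at e3 ⊢
    linarith
  have hcont : Continuous f := by
    have : LipschitzWith (Real.toNNReal (2*R)) f := by
      apply LipschitzWith.of_dist_le_mul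
      intro φ ψ
      rw [Real.dist_eq, Real.dist_eq, Real.coe_toNNReal _ (by linarith)]
      have l1 := hlip φ ψ
      have l2 := hlip ψ φ
      rw [abs_sub_comm ψ φ] at l2
      rw [abs_le]
      constructor <;> linarith
    exact this.continuous
  set m : ℝ → ℝ := fun φ => (f φ - f (φ + Real.pi))/2 with hm
  have hmpi : ∀ φ, m (φ + Real.pi) = -m φ := by
    intro φ
    simp only [hm]
    rw [show φ + Real.pi + Real.pi = φ + 2*Real.pi by ring, hper]
    ring
  have hmb : ∀ φ, ∀ x ∈ S, |BorsukAux.gg φ x - m φ| ≤ 1/2 := by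
    intro φ x hx
    have h1 := hfle φ x hx
    have h2 : -BorsukAux.gg φ x ≤ f (φ + Real.pi) := by
      have := hfle (φ + Real.pi) x hx
      rwa [BorsukAux.gg_pi] at this
    have h3 := hwidth φ
    rw [abs_le]
    simp only [hm]
    constructor <;> linarith
  have hmc : Continuous m := (hcont.sub (hcont.comp (continuous_add_right Real.pi))).div_const 2
  obtain ⟨θ, hθ⟩ : ∃ θ, m θ + m (θ + 2*Real.pi/3) + m (θ + 4*Real.pi/3) = 0 := by
    set F : ℝ → ℝ := fun φ => m φ + m (φ + 2*Real.pi/3) + m (φ + 4*Real.pi/3) with hF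
    have hFc : Continuous F :=
      (hmc.add (hmc.comp (continuous_add_right _))).add (hmc.comp (continuous_add_right _))
    have hFneg : F (Real.pi/3) = -F 0 := by
      simp only [hF]
      have h1 : m (Real.pi/3) = - m (0 + 4*Real.pi/3) := by
        have := hmpi (Real.pi/3)
        rw [show Real.pi/3 + Real.pi = 0 + 4*Real.pi/3 by ring] at this
        linarith
      have h2 : m (Real.pi/3 + 2*Real.pi/3) = - m 0 := by
        have := hmpi 0
        rw [show (0:ℝ) + Real.pi = Real.pi/3 + 2*Real.pi/3 by ring] at this
        linarith
      have h3 : m (Real.pi/3 + 4*Real.pi/3) = - m (0 + 2*Real.pi/3) := by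
        have := hmpi (0 + 2*Real.pi/3)
        rw [show (0:ℝ) + 2*Real.pi/3 + Real.pi = Real.pi/3 + 4*Real.pi/3 by ring] at this
        linarith
      rw [h1, h2, h3]; ring
    have key : (0:ℝ) ∈ Set.uIcc (F 0) (F (Real.pi/3)) := by
      rw [hFneg]
      rcases le_total (F 0) 0 with h | h
      · exact Set.mem_uIcc.2 (Or.inl ⟨h, by linarith⟩)
      · exact Set.mem_uIcc.2 (Or.inr ⟨by linarith, h⟩)
    obtain ⟨θ, -, hθ0⟩ := intermediate_value_uIcc (a := 0) (b := Real.pi/3) hFc.continuousOn key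
    refine ⟨θ, ?_⟩
    have : F θ = 0 := hθ0
    simpa only [hF] using this
  set t0 : EuclideanSpace ℝ (Fin 2) → ℝ := fun x => BorsukAux.gg θ x - m θ with ht0def
  set t1 : EuclideanSpace ℝ (Fin 2) → ℝ :=
    fun x => BorsukAux.gg (θ + 2*Real.pi/3) x - m (θ + 2*Real.pi/3) with ht1def
  set t2 : EuclideanSpace ℝ (Fin 2) → ℝ :=
    fun x => BorsukAux.gg (θ + 4*Real.pi/3) x - m (θ + 4*Real.pi/3) with ht2def
  have htsum : ∀ x, t0 x + t1 x + t2 x = 0 := by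
    intro x
    have h5 := BorsukAux.sum_zero θ x
    simp only [ht0def, ht1def, ht2def]
    linarith
  have hb0 : ∀ x ∈ S, |t0 x| ≤ 1/2 := fun x hx => hmb θ x hx
  have hb1 : ∀ x ∈ S, |t1 x| ≤ 1/2 := fun x hx => hmb _ x hx
  have hb2 : ∀ x ∈ S, |t2 x| ≤ 1/2 := fun x hx => hmb _ x hx
  have hdist_le : ∀ x y : EuclideanSpace ℝ (Fin 2),
      (t0 x - t0 y)^2 + (t1 x - t1 y)^2 + (t2 x - t2 y)^2 ≤ 9/8 →
      dist x y ≤ Real.sqrt 3 / 2 := by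
    intro x y hxy
    have hsq := BorsukAux.sq_sum θ x y
    have e0 : t0 x - t0 y = BorsukAux.gg θ x - BorsukAux.gg θ y := by
      simp only [ht0def]; ring
    have e1 : t1 x - t1 y
        = BorsukAux.gg (θ + 2*Real.pi/3) x - BorsukAux.gg (θ + 2*Real.pi/3) y := by
      simp only [ht1def]; ring
    have e2 : t2 x - t2 y
        = BorsukAux.gg (θ + 4*Real.pi/3) x - BorsukAux.gg (θ + 4*Real.pi/3) y := by
      simp only [ht2def]; ring
    rw [e0, e1, e2] at hxy
    have hd2 : (x 0 - y 0)^2 + (x 1 - y 1)^2 ≤ 3/4 := by linarith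
    rw [BorsukAux.dist_formula]
    calc Real.sqrt ((x 0 - y 0)^2 + (x 1 - y 1)^2)
        ≤ Real.sqrt (3/4) := Real.sqrt_le_sqrt hd2
    _ = Real.sqrt 3 / 2 := by
        rw [show (3/4:ℝ) = (Real.sqrt 3 / 2)^2 by
          rw [div_pow, Real.sq_sqrt] <;> norm_num]
        exact Real.sqrt_sq (by positivity)
  refine ⟨{x | x ∈ S ∧ t2 x ≤ t0 x ∧ t2 x ≤ t1 x},
          {x | x ∈ S ∧ t0 x < t2 x ∧ t0 x ≤ t1 x},
          {x | x ∈ S ∧ t1 x < t2 x ∧ t1 x < t0 x}, ?_, ?_, ?_, ?_, ?_, ?_, ?_⟩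
  · ext x
    constructor
    · intro hx
      rcases le_or_gt (t2 x) (t0 x) with h02 | h02
      · rcases le_or_gt (t2 x) (t1 x) with h12 | h12
        · exact Or.inl (Or.inl ⟨hx, h02, h12⟩)
        · exact Or.inr ⟨hx, h12, lt_of_lt_of_le h12 h02⟩
      · rcases le_or_gt (t0 x) (t1 x) with h01 | h01
        · exact Or.inl (Or.inr ⟨hx, h02, h01⟩)
        · exact Or.inr ⟨hx, h01.trans h02, h01⟩
    · rintro ((⟨h, -⟩ | ⟨h, -⟩) | ⟨h, -⟩) <;> exact h
  · rw [Set.disjoint_left]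
    rintro x ⟨-, h1, -⟩ ⟨-, h2, -⟩
    exact absurd h1 (not_le.2 h2)
  · rw [Set.disjoint_left]
    rintro x ⟨-, -, h1⟩ ⟨-, h2, -⟩
    exact absurd h1 (not_le.2 h2)
  · rw [Set.disjoint_left]
    rintro x ⟨-, -, h1⟩ ⟨-, -, h2⟩
    exact absurd h1 (not_le.2 h2)
  · apply Metric.diam_le_of_forall_dist_le (by positivity)
    rintro x ⟨hxS, hx1, hx2⟩ y ⟨hyS, hy1, hy2⟩
    apply hdist_le
    have := BorsukAux.core (t0 x) (t1 x) (t2 x) (t0 y) (t1 y) (t2 y)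
      (htsum x) (htsum y) (hb0 x hxS) (hb1 x hxS) (hb2 x hxS)
      (hb0 y hyS) (hb1 y hyS) (hb2 y hyS) hx1 hx2 hy1 hy2
    linarith
  · apply Metric.diam_le_of_forall_dist_le (by positivity)
    rintro x ⟨hxS, hx1, hx2⟩ y ⟨hyS, hy1, hy2⟩
    apply hdist_le
    have := BorsukAux.core (t1 x) (t2 x) (t0 x) (t1 y) (t2 y) (t0 y)
      (by linarith [htsum x]) (by linarith [htsum y]) (hb1 x hxS) (hb2 x hxS) (hb0 x hxS)
      (hb1 y hyS) (hb2 y hyS) (hb0 y hyS) hx2 hx1.le hy2 hy1.le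
    linarith
  · apply Metric.diam_le_of_forall_dist_le (by positivity)
    rintro x ⟨hxS, hx1, hx2⟩ y ⟨hyS, hy1, hy2⟩
    apply hdist_le
    have := BorsukAux.core (t2 x) (t0 x) (t1 x) (t2 y) (t0 y) (t1 y)
      (by linarith [htsum x]) (by linarith [htsum y]) (hb2 x hxS) (hb0 x hxS) (hb1 x hxS)
      (hb2 y hyS) (hb0 y hyS) (hb1 y hyS) hx1.le hx2.le hy1.le hy2.le
    linarith
end

section
/- The bound √3/2 in the planar Borsuk partition is sharp: the closed unit-diameter disk in ℝ² cannot be partitioned into three sets each of diameter strictly less than √3/2. -/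
/-!
Rotate an inscribed equilateral triangle (side `√3/2`) around the boundary circle. If the three
pieces had diameters at most `d < √3/2`, the vertices of every rotated triangle would lie in
three different pieces. By continuity, points near a vertex are still farther than `d` from the
two other vertices, so the piece containing the vertex at angle `t` is locally constant in `t`,
hence constant; but the vertices at angles `0` and `2π/3` lie in different pieces.
-/

open Real Filter Topology

section RotatingTriangle

variable {X : Type*} [PseudoMetricSpace X] {f : ℝ → X} {τ d : ℝ}

theorem isLocallyConstant_of_dist_le_of_lt_dist (hf : Continuous f)
    (h₁ : ∀ t, d < dist (f t) (f (t + τ))) (h₂ : ∀ t, d < dist (f t) (f (t + 2 * τ)))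
    {c : ℝ → Fin 3} (hc : ∀ s t, c s = c t → dist (f s) (f t) ≤ d) :
    IsLocallyConstant c := by
  have hne : ∀ {s t}, d < dist (f s) (f t) → c s ≠ c t := fun h hst => (hc _ _ hst).not_gt h
  refine (IsLocallyConstant.iff_eventually_eq c).2 fun u => ?_
  have near : ∀ p, d < dist (f u) p → ∀ᶠ s in 𝓝 u, d < dist (f s) p := fun p hp =>
    continuousAt_const.eventually_lt (hf.dist continuous_const).continuousAt hp
  filter_upwards [near _ (h₁ u), near _ (h₂ u)] with s hs₁ hs₂
  have h₃ : d < dist (f (u + τ)) (f (u + 2 * τ)) := by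
    simpa [add_assoc, two_mul] using h₁ (u + τ)
  -- `c s` and `c u` both avoid the two distinct colours `c (u + τ)` and `c (u + 2 * τ)`.
  have := hne hs₁; have := hne hs₂; have := hne h₃; have := hne (h₁ u); have := hne (h₂ u)
  omega

theorem exists_notMem_union_of_lt_dist (hf : Continuous f)
    (h₁ : ∀ t, d < dist (f t) (f (t + τ))) (h₂ : ∀ t, d < dist (f t) (f (t + 2 * τ)))
    {A B C : Set X} (hA : ∀ x ∈ A, ∀ y ∈ A, dist x y ≤ d)
    (hB : ∀ x ∈ B, ∀ y ∈ B, dist x y ≤ d) (hC : ∀ x ∈ C, ∀ y ∈ C, dist x y ≤ d) :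
    ∃ t, f t ∉ A ∪ B ∪ C := by
  classical
  by_contra! hcover
  let c : ℝ → Fin 3 := fun t => if f t ∈ A then 0 else if f t ∈ B then 1 else 2
  have hc : ∀ s t, c s = c t → dist (f s) (f t) ≤ d := by
    intro s t hst
    have hs := hcover s
    have ht := hcover t
    simp only [c] at hst
    split_ifs at hst <;> simp_all
  have hconst : c 0 = c τ :=
    (isLocallyConstant_of_dist_le_of_lt_dist hf h₁ h₂ hc).apply_eq_of_preconnectedSpace 0 τ
  exact (hc 0 τ hconst).not_gt (by simpa using h₁ 0)

end RotatingTriangle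

noncomputable def circlePoint (r t : ℝ) : EuclideanSpace ℝ (Fin 2) := !₂[r * cos t, r * sin t]

theorem continuous_circlePoint (r : ℝ) : Continuous (circlePoint r) := by
  unfold circlePoint
  fun_prop

theorem norm_circlePoint (r t : ℝ) : ‖circlePoint r t‖ = |r| := by
  simp [EuclideanSpace.norm_eq, Fin.sum_univ_two, circlePoint, mul_pow, ← mul_add, sqrt_sq_eq_abs]

theorem dist_circlePoint_add (r t θ : ℝ) :
    dist (circlePoint r t) (circlePoint r (t + θ)) = |r| * √(2 - 2 * cos θ) := by
  have h : (r * cos t - r * cos (t + θ)) ^ 2 + (r * sin t - r * sin (t + θ)) ^ 2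
      = r ^ 2 * (2 - 2 * cos θ) := by
    rw [cos_add, sin_add]
    linear_combination (r ^ 2 * ((1 - cos θ) ^ 2 + sin θ ^ 2)) * cos_sq_add_sin_sq t
      + r ^ 2 * sin_sq_add_cos_sq θ
  simp only [EuclideanSpace.dist_eq, Fin.sum_univ_two, circlePoint, Real.dist_eq, sq_abs]
  simp [h, sqrt_mul (sq_nonneg r), sqrt_sq_eq_abs]

theorem Real.cos_two_pi_div_three : cos (2 * π / 3) = -1 / 2 := by
  rw [show 2 * π / 3 = π - π / 3 by ring, cos_pi_sub, cos_pi_div_three]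
  norm_num

/-- Sharpness of `√3/2` in the planar Borsuk problem: the closed disk of
diameter `1` cannot be partitioned into three sets each of diameter `< √3/2`. -/
theorem borsuk_plane_sharpness :
    ¬ ∃ A B C : Set (EuclideanSpace ℝ (Fin 2)),
      Metric.closedBall (0 : EuclideanSpace ℝ (Fin 2)) (1/2) = A ∪ B ∪ C ∧
      Disjoint A B ∧ Disjoint A C ∧ Disjoint B C ∧
      Metric.diam A < Real.sqrt 3 / 2 ∧
      Metric.diam B < Real.sqrt 3 / 2 ∧
      Metric.diam C < Real.sqrt 3 / 2 := by
  rintro ⟨A, B, C, hcover, -, -, -, hA, hB, hC⟩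
  set d := max (Metric.diam A) (max (Metric.diam B) (Metric.diam C))
  have hd : d < √3 / 2 := max_lt hA (max_lt hB hC)
  have hsmall : ∀ S ⊆ A ∪ B ∪ C, Metric.diam S ≤ d → ∀ x ∈ S, ∀ y ∈ S, dist x y ≤ d :=
    fun S hS hSd x hx y hy => (Metric.dist_le_diam_of_mem
      (Metric.isBounded_closedBall.subset (hcover ▸ hS)) hx hy).trans hSd
  have hside : ∀ θ, cos θ = -1 / 2 →
      ∀ t, d < dist (circlePoint (1 / 2) t) (circlePoint (1 / 2) (t + θ)) := by
    intro θ hθ t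
    rw [dist_circlePoint_add, hθ]
    norm_num
    linarith
  have hcos₂ : cos (2 * (2 * π / 3)) = -1 / 2 := by
    rw [cos_two_mul, cos_two_pi_div_three]
    norm_num
  obtain ⟨t, ht⟩ := exists_notMem_union_of_lt_dist (continuous_circlePoint (1 / 2))
    (hside _ cos_two_pi_div_three) (hside _ hcos₂)
    (hsmall A (Set.subset_union_left.trans Set.subset_union_left) (le_max_left _ _))
    (hsmall B (Set.subset_union_right.trans Set.subset_union_left)
      ((le_max_left _ _).trans (le_max_right _ _)))
    (hsmall C Set.subset_union_right ((le_max_right _ _).trans (le_max_right _ _)))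
  exact ht (hcover ▸ by simp [norm_circlePoint])
end
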